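/- arXiv:1001.2767 — 6 statements merged into one kernel-verified Lean document; each statement's English description precedes it below -/
import Mathlib

section
/- Let G'_{n,α} be the (n+1)×(n+1) matrix with entries (G')_{i,j} = α^{|i-j|} for i,j ∈ {0,…,n} and 0 < α < 1. Then det(G'_{n,α}) = (1-α²)^n, and in particular G'_{n,α} is invertible. -/
/-!
Subtracting `α` times row `1` from row `0` of the matrix `(α ^ |i - j|)` leaves the row
`(1 - α², 0, …, 0)`, and deleting row and column `0` gives the same kind of matrix one size
smaller. Expanding along row `0` therefore multiplies the determinant by `1 - α²` at each size.
-/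

namespace Matrix

variable {R : Type*} [CommRing R]

theorem det_eq_mul_det_submatrix_succ_of_row_zero {n : ℕ}
    (A : Matrix (Fin (n + 1)) (Fin (n + 1)) R) (hA : ∀ j ≠ 0, A 0 j = 0) : A.det = A 0 0 * (A.submatrix Fin.succ Fin.succ).det := by
  rw [det_succ_row_zero, Fintype.sum_eq_single 0 fun j hj => by simp [hA j hj]]
  simp

/-- The Kac–Murdock–Szegő matrix of size `n`; the paper's `G'_{n,α}` is `kms α (n + 1)`. -/
def kms (α : R) (n : ℕ) : Matrix (Fin n) (Fin n) R :=
  of fun i j => α ^ ((i : ℤ) - j).natAbs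

@[simp]
theorem kms_apply (α : R) {n : ℕ} (i j : Fin n) : kms α n i j = α ^ ((i : ℤ) - j).natAbs := rfl

theorem kms_submatrix_succ (α : R) (n : ℕ) :
    (kms α (n + 1)).submatrix Fin.succ Fin.succ = kms α n := by
  ext i j
  simp [Fin.val_succ]

theorem kms_row_zero_sub_smul_row_one (α : R) (n : ℕ) :
    kms α (n + 2) 0 - α • kms α (n + 2) 1 = Pi.single 0 (1 - α ^ 2) := by
  ext j
  rcases Fin.eq_zero_or_eq_succ j with rfl | ⟨j, rfl⟩
  · simp [sq]
  · have h : (-1 + -(j : ℤ)).natAbs = j + 1 := by omega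
    simp [Fin.val_succ, h, pow_succ']

theorem det_kms (α : R) (n : ℕ) : (kms α (n + 1)).det = (1 - α ^ 2) ^ n := by
  induction n with
  | zero => simp
  | succ n ih =>
    rw [← det_updateRow_add_smul_self (kms α (n + 2)) zero_ne_one (-α), neg_smul,
      ← sub_eq_add_neg, kms_row_zero_sub_smul_row_one, det_eq_mul_det_submatrix_succ_of_row_zero]
    · rw [← Fin.succAbove_zero, submatrix_updateRow_succAbove, Fin.succAbove_zero,
        kms_submatrix_succ, ih]
      simp [pow_succ']
    · intro j hj
      simp [Pi.single_eq_of_ne hj]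

end Matrix

/-- `det G'_{n,α} = (1-α²)^n`, where `G'` is the `(n+1)×(n+1)` matrix with
entries `α^{|i-j|}`; in particular `G'` is invertible. -/
theorem det_geom_prime (n : ℕ) (α : ℝ) (h0 : 0 < α) (h1 : α < 1)
    (G : Matrix (Fin (n + 1)) (Fin (n + 1)) ℝ)
    (hG : ∀ i j, G i j = α ^ ((i : ℤ) - (j : ℤ)).natAbs) :
    G.det = (1 - α ^ 2) ^ n ∧ IsUnit G.det := by
  obtain rfl : G = Matrix.kms α (n + 1) := Matrix.ext hG
  have hα : 1 - α ^ 2 ≠ 0 := by nlinarith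
  rw [Matrix.det_kms]
  exact ⟨rfl, (pow_ne_zero n hα).isUnit⟩
end

section
/- Replacing the first column: for the matrix G'_{n,α} with entries α^{|i-j|} and any vector x = (x_1,…,x_n)ᵀ, the determinant of the matrix obtained by replacing the first column of G'_{n,α} by x equals (1-α²)^{n-2}·(x_1 - α·x_2). In particular it is positive if and only if x_1 > α·x_2. -/
/-!
Subtracting `α` times row `i + 1` from row `i`, for every row but the last, is left
multiplication by the unit upper-triangular matrix `1 - α • upShift`, so it preserves the
determinant. Since `α ^ (j - i) = α * α ^ (j - i - 1)` for `i < j`, it clears every entry of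
`G'` above the diagonal, and the first column only sits on or below it. The result is lower
triangular with diagonal `x₁ - α x₂, 1 - α², …, 1 - α², 1`.
-/

open Matrix

theorem pow_natAbs_sub_eq_mul_pow_natAbs_succ_sub {M : Type*} [Monoid M] (a : M) {i j : ℕ}
    (h : i < j) : a ^ ((i : ℤ) - j).natAbs = a * a ^ ((i + 1 : ℕ) - (j : ℤ)).natAbs := by
  rw [← pow_succ']
  congr 1
  omega

namespace Matrix

variable {R : Type*} [CommRing R] {m : ℕ}

def upShift : Matrix (Fin m) (Fin m) R :=
  of fun i j => if (j : ℕ) = i + 1 then 1 else 0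

theorem upShift_mul_apply_of_lt (M : Matrix (Fin m) (Fin m) R) (i k : Fin m)
    (h : (i : ℕ) + 1 < m) :
    ((upShift : Matrix (Fin m) (Fin m) R) * M) i k = M ⟨i + 1, h⟩ k := by
  rw [mul_apply, Fintype.sum_eq_single ⟨i + 1, h⟩]
  · simp [upShift]
  · intro j hj
    simp [upShift, Fin.ext_iff.not.mp hj]

theorem upShift_mul_apply_of_le (M : Matrix (Fin m) (Fin m) R) (i k : Fin m)
    (h : m ≤ (i : ℕ) + 1) : ((upShift : Matrix (Fin m) (Fin m) R) * M) i k = 0 := by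
  rw [mul_apply]
  refine Finset.sum_eq_zero fun j _ => ?_
  simp [upShift, show (j : ℕ) ≠ i + 1 by omega]

theorem one_sub_smul_upShift_mul_apply_of_lt (c : R) (M : Matrix (Fin m) (Fin m) R)
    (i k : Fin m) (h : (i : ℕ) + 1 < m) :
    ((1 - c • upShift : Matrix (Fin m) (Fin m) R) * M) i k = M i k - c * M ⟨i + 1, h⟩ k := by
  rw [sub_mul, one_mul, smul_mul, sub_apply, smul_apply, upShift_mul_apply_of_lt _ _ _ h,
    smul_eq_mul]

theorem one_sub_smul_upShift_mul_apply_of_le (c : R) (M : Matrix (Fin m) (Fin m) R)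
    (i k : Fin m) (h : m ≤ (i : ℕ) + 1) :
    ((1 - c • upShift : Matrix (Fin m) (Fin m) R) * M) i k = M i k := by
  rw [sub_mul, one_mul, smul_mul, sub_apply, smul_apply, upShift_mul_apply_of_le _ _ _ h,
    smul_zero, sub_zero]

theorem det_one_sub_smul_upShift (c : R) :
    (1 - c • upShift : Matrix (Fin m) (Fin m) R).det = 1 := by
  have h_upper : (1 - c • upShift : Matrix (Fin m) (Fin m) R).IsUpperTriangular :=
    fun i j hji => by
      have hji : (j : ℕ) < i := hji
      simp [upShift, Fin.ext_iff, hji.ne', show (j : ℕ) ≠ i + 1 by omega]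
  rw [det_of_isUpperTriangular h_upper]
  simp [upShift]

/-- The matrix `G'_{m,α}`, indexed from `0`: the paper's `x₁, x₂` are `x 0, x 1` here. -/
def kacMurdockSzego (α : R) : Matrix (Fin m) (Fin m) R :=
  of fun i j => α ^ ((i : ℤ) - (j : ℤ)).natAbs

variable {n : ℕ} (α : R) (x : Fin (n + 2) → R)

theorem isLowerTriangular_one_sub_smul_upShift_mul_updateCol_zero_kacMurdockSzego :
    ((1 - α • upShift) * (kacMurdockSzego α).updateCol 0 x).IsLowerTriangular := by
  intro i j hij
  have hij : (i : ℕ) < j := hij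
  have hj : j ≠ 0 := by rintro rfl; simp at hij
  rw [one_sub_smul_upShift_mul_apply_of_lt _ _ _ _ (by omega)]
  simp only [updateCol_ne hj, kacMurdockSzego, of_apply]
  rw [pow_natAbs_sub_eq_mul_pow_natAbs_succ_sub α hij, sub_self]

theorem det_updateCol_zero_kacMurdockSzego :
    ((kacMurdockSzego α).updateCol 0 x).det = (1 - α ^ 2) ^ n * (x 0 - α * x 1) := by
  set A := (1 - α • upShift) * (kacMurdockSzego α).updateCol 0 x with hA
  have h_first : A 0 0 = x 0 - α * x 1 := by
    rw [hA, one_sub_smul_upShift_mul_apply_of_lt _ _ _ _ (by simp), updateCol_self,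
      updateCol_self]
    rfl
  have h_middle (k : Fin n) : A k.castSucc.succ k.castSucc.succ = 1 - α ^ 2 := by
    rw [hA, one_sub_smul_upShift_mul_apply_of_lt _ _ _ _ (by simp)]
    simp [kacMurdockSzego, sq]
  have h_last : A (Fin.last (n + 1)) (Fin.last (n + 1)) = 1 := by
    rw [hA, one_sub_smul_upShift_mul_apply_of_le _ _ _ _ (by simp)]
    simp [kacMurdockSzego]
  calc ((kacMurdockSzego α).updateCol 0 x).det
      = A.det := by rw [det_mul, det_one_sub_smul_upShift, one_mul]
    _ = ∏ i, A i i := det_of_isLowerTriangular _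
      (isLowerTriangular_one_sub_smul_upShift_mul_updateCol_zero_kacMurdockSzego α x)
    _ = (1 - α ^ 2) ^ n * (x 0 - α * x 1) := by
      rw [Fin.prod_univ_succ, Fin.prod_univ_castSucc]
      simp only [h_first, h_middle, Fin.succ_last, h_last]
      simp [mul_comm]

end Matrix

/-- Replacing the first column of `G'_{n,α}` (entries `α^{|i-j|}`, size `n ≥ 2`)
by a vector `x` gives determinant `(1-α²)^{n-2}·(x₁ - α·x₂)`; in particular it is
positive iff `x₁ > α·x₂`. -/
theorem det_update_first_column (n : ℕ) (α : ℝ) (h0 : 0 < α) (h1 : α < 1)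
    (G : Matrix (Fin (n + 2)) (Fin (n + 2)) ℝ)
    (hG : ∀ i j, G i j = α ^ ((i : ℤ) - (j : ℤ)).natAbs)
    (x : Fin (n + 2) → ℝ) :
    (G.updateCol 0 x).det = (1 - α ^ 2) ^ n * (x 0 - α * x 1) ∧
    (0 < (G.updateCol 0 x).det ↔ α * x 1 < x 0) := by
  obtain rfl : G = kacMurdockSzego α := Matrix.ext hG
  have h_det := det_updateCol_zero_kacMurdockSzego α x
  have h_pos : 0 < (1 - α ^ 2) ^ n := pow_pos (by nlinarith) n
  exact ⟨h_det, by rw [h_det, mul_pos_iff_of_pos_left h_pos, sub_pos]⟩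
end

section
/- For every column m of the matrix G'_{n,β} (entries β^{|i-j|}) with 0 < α < β < 1, and every three consecutive entries x₁, x₂, x₃ of that column, the inequality (1+α²)·x₂ - α·(x₁ + x₃) > 0 holds. -/
/-!
Off the diagonal the three entries are `β^m, β^(m+1), β^(m+2)` in some order, and
`(1 + α²) β^(m+1) - α (β^m + β^(m+2)) = β^m (β - α) (1 - α β)`. On the diagonal they are
`β, 1, β`, and `1 + α² - 2 α β > 1 + α² - 2 α = (1 - α)²`.
-/

section GeometricThreeTerm

variable {α β : ℝ}

lemma geometric_three_term_succ_pos (hβ : 0 < β) (hαβ : α < β) (hαβ₁ : α * β < 1) (m : ℕ) :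
    0 < (1 + α ^ 2) * β ^ (m + 1) - α * (β ^ m + β ^ (m + 2)) := by
  have hfactor : (1 + α ^ 2) * β ^ (m + 1) - α * (β ^ m + β ^ (m + 2))
      = β ^ m * ((β - α) * (1 - α * β)) := by ring
  rw [hfactor]
  exact mul_pos (pow_pos hβ m) (mul_pos (sub_pos.2 hαβ) (sub_pos.2 hαβ₁))

lemma geometric_three_term_zero_pos (hα : 0 < α) (hαβ : α < β) (hβ : β < 1) :
    0 < (1 + α ^ 2) * β ^ 0 - α * (β ^ 1 + β ^ 1) := by
  nlinarith [sq_nonneg (1 - α)]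

lemma geometric_three_term_pos (hα : 0 < α) (hαβ : α < β) (hβ : β < 1) (k : ℤ) :
    0 < (1 + α ^ 2) * β ^ k.natAbs - α * (β ^ (k - 1).natAbs + β ^ (k + 1).natAbs) := by
  wlog hk : 0 ≤ k generalizing k
  · have hneg := this (-k) (by omega)
    rwa [Int.natAbs_neg, show -k - 1 = -(k + 1) by ring, show -k + 1 = -(k - 1) by ring,
      Int.natAbs_neg, Int.natAbs_neg, add_comm (β ^ (k + 1).natAbs)] at hneg
  have hαβ₁ : α * β < 1 := by nlinarith
  obtain ⟨m, rfl⟩ := Int.eq_ofNat_of_zero_le hk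
  cases m with
  | zero => simpa using geometric_three_term_zero_pos hα hαβ hβ
  | succ m =>
    have hsucc := geometric_three_term_succ_pos (hα.trans hαβ) hαβ hαβ₁ m
    rwa [show ((m + 1 : ℕ) : ℤ) - 1 = m by push_cast; ring,
      show ((m + 1 : ℕ) : ℤ) + 1 = ((m + 2 : ℕ) : ℤ) by push_cast; ring,
      Int.natAbs_natCast, Int.natAbs_natCast, Int.natAbs_natCast]

end GeometricThreeTerm

theorem geometric_column_three_term_general
    (α β : ℝ) (h0 : 0 < α) (hab : α < β) (h1 : β < 1)
    (i j : ℤ) :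
    0 < (1 + α ^ 2) * β ^ (i - j).natAbs -
        α * (β ^ (i - 1 - j).natAbs + β ^ (i + 1 - j).natAbs) := by
  rw [sub_right_comm, add_sub_right_comm]
  exact geometric_three_term_pos h0 hab h1 (i - j)

/-- Every three consecutive entries `x₁ = β^{|i-1-j|}, x₂ = β^{|i-j|},
x₃ = β^{|i+1-j|}` of a column `j` of `G'_{n,β}` (with `2 ≤ i ≤ n-1`,
`1 ≤ j ≤ n`, `0 < α < β < 1`) satisfy `(1+α²)·x₂ - α·(x₁ + x₃) > 0`. -/
theorem geometric_column_three_term (n : ℕ) (hn : 3 ≤ n)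
    (α β : ℝ) (h0 : 0 < α) (hab : α < β) (h1 : β < 1)
    (i j : ℤ) (hi1 : 2 ≤ i) (hi2 : i ≤ (n : ℤ) - 1) (hj1 : 1 ≤ j) (hj2 : j ≤ (n : ℤ)) :
    0 < (1 + α ^ 2) * β ^ (i - j).natAbs -
        α * (β ^ (i - 1 - j).natAbs + β ^ (i + 1 - j).natAbs) :=
  geometric_column_three_term_general α β h0 hab h1 i j
end

section
/- Derivability of more-private geometric mechanisms: for privacy parameters 0 < α ≤ β < 1, there exists a row-stochastic matrix T (nonnegative entries, rows summing to 1) such that G_{n,β} = G_{n,α}·T, where G_{n,γ} denotes the range-restricted geometric mechanism matrix with parameter γ. -/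
/-!
Write `G_{n,γ} = K_γ D_γ`, where `K_γ = (γ ^ |i - j|)` is the Kac–Murdock–Szegő matrix and `D_γ` is
the diagonal matrix of column weights. The inverse of `K_a` is `(1 - a²)⁻¹ B_a` with `B_a`
tridiagonal, so `T = G_α⁻¹ G_β = D_α⁻¹ (1 - α²)⁻¹ B_α K_β D_β`. Off the diagonal, the entries of
`B_α K_β` are `(β - α) β^(|i-j|-1)` times `1` or `1 - αβ`, hence nonnegative when `α ≤ β`. The rows
of `T` sum to `1` because `G_α` and `G_β` both fix the all-ones vector.
-/

open Finset Matrix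

-- The Kac–Murdock–Szegő matrix.
noncomputable def kmsMatrix (n : ℕ) (γ : ℝ) : Matrix (Fin (n + 1)) (Fin (n + 1)) ℝ :=
  of fun i j => γ ^ ((i : ℤ) - (j : ℤ)).natAbs

noncomputable def kmsTridiag (n : ℕ) (a : ℝ) : Matrix (Fin (n + 1)) (Fin (n + 1)) ℝ :=
  of fun i k => if (i : ℕ) = k then (if (i : ℕ) = 0 ∨ (i : ℕ) = n then 1 else 1 + a ^ 2)
    else if ((i : ℤ) - (k : ℤ)).natAbs = 1 then -a else 0

noncomputable def geomWeight (n : ℕ) (γ : ℝ) (j : Fin (n + 1)) : ℝ :=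
  if (j : ℕ) = 0 ∨ (j : ℕ) = n then 1 / (1 + γ) else (1 - γ) / (1 + γ)

-- The mechanism `G_{n,γ}`.
noncomputable def geomMech (n : ℕ) (γ : ℝ) : Matrix (Fin (n + 1)) (Fin (n + 1)) ℝ :=
  kmsMatrix n γ * diagonal (geomWeight n γ)

noncomputable def geomMechInv (n : ℕ) (a : ℝ) : Matrix (Fin (n + 1)) (Fin (n + 1)) ℝ :=
  diagonal (fun i => ((1 - a ^ 2) * geomWeight n a i)⁻¹) * kmsTridiag n a

lemma geomMech_apply (n : ℕ) (γ : ℝ) (i j : Fin (n + 1)) :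
    geomMech n γ i j =
      if (j : ℕ) = 0 ∨ (j : ℕ) = n then γ ^ ((i : ℤ) - (j : ℤ)).natAbs / (1 + γ)
      else ((1 - γ) / (1 + γ)) * γ ^ ((i : ℤ) - (j : ℤ)).natAbs := by
  rw [geomMech, mul_diagonal, kmsMatrix, of_apply, geomWeight]
  split_ifs <;> ring

lemma geomWeight_pos (n : ℕ) {γ : ℝ} (h₀ : -1 < γ) (h₁ : γ < 1) (j : Fin (n + 1)) :
    0 < geomWeight n γ j := by
  unfold geomWeight
  split_ifs <;> apply div_pos <;> linarith

lemma kmsTridiag_mulVec_apply (n : ℕ) (a : ℝ) (f : ℕ → ℝ) (i : Fin (n + 1)) :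
    (kmsTridiag n a *ᵥ fun k => f k) i =
      (if (i : ℕ) = 0 ∨ (i : ℕ) = n then 1 else 1 + a ^ 2) * f i -
        a * (if 0 < (i : ℕ) then f (i - 1) else 0) -
        a * (if (i : ℕ) < n then f (i + 1) else 0) := by
  obtain ⟨i, hi⟩ := i
  set d := if i = 0 ∨ i = n then 1 else 1 + a ^ 2
  have hsplit : ∀ k : ℕ, (if i = k then d else if ((i : ℤ) - k).natAbs = 1 then -a else 0) * f k =
      (if i = k then d * f k else 0) - (if i = k + 1 then a * f k else 0) -
        (if k = i + 1 then a * f k else 0) := by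
    intro k
    split_ifs <;> first | omega | ring
  simp only [mulVec, dotProduct, kmsTridiag, of_apply]
  rw [Fin.sum_univ_eq_sum_range (fun k => (if i = k then d
      else if ((i : ℤ) - k).natAbs = 1 then -a else 0) * f k),
    sum_congr rfl fun k _ => hsplit k, sum_sub_distrib, sum_sub_distrib, sum_ite_eq, sum_ite_eq',
    if_pos (mem_range.2 hi)]
  congr 2
  · rcases i with _ | i
    · simp
    · simp [show i < n + 1 by omega]
  · simp

lemma kmsTridiag_mulVec_one {n : ℕ} (hn : 1 ≤ n) {a : ℝ} (ha : 1 + a ≠ 0) :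
    kmsTridiag n a *ᵥ 1 = (1 - a ^ 2) • geomWeight n a := by
  ext ⟨i, hi⟩
  refine (kmsTridiag_mulVec_apply n a (fun _ => 1) ⟨i, hi⟩).trans ?_
  rw [Pi.smul_apply, geomWeight, smul_eq_mul]
  dsimp only
  rcases (show i = 0 ∨ i = n ∨ (0 < i ∧ i < n) by omega) with rfl | rfl | ⟨hi₀, hin⟩
  · simp only [true_or, if_true, lt_irrefl, if_false, show 0 < n by omega]
    field_simp
    ring
  · simp only [or_true, if_true, lt_irrefl, if_false, show 0 < i by omega]
    field_simp
    ring
  · simp only [show ¬(i = 0 ∨ i = n) by omega, if_false, hi₀, hin, if_true]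
    field_simp
    ring

-- Entries of `kmsTridiag n a * kmsMatrix n γ` in an end row and in an inner row, as functions of
-- `|i - j|`.
noncomputable def endRowEntry (a γ : ℝ) : ℕ → ℝ
  | 0 => 1 - a * γ
  | m + 1 => (γ - a) * γ ^ m

noncomputable def innerRowEntry (a γ : ℝ) : ℕ → ℝ
  | 0 => 1 + a ^ 2 - 2 * a * γ
  | m + 1 => (γ - a) * (1 - a * γ) * γ ^ m

lemma endRowEntry_eq (a γ : ℝ) (m : ℕ) :
    γ ^ m - a * γ ^ ((m : ℤ) - 1).natAbs = endRowEntry a γ m := by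
  rcases m with _ | m
  · simp [endRowEntry]
  · simp [endRowEntry, pow_succ]
    ring

lemma innerRowEntry_eq (a γ : ℝ) (t : ℤ) :
    (1 + a ^ 2) * γ ^ t.natAbs - a * γ ^ (t - 1).natAbs - a * γ ^ (t + 1).natAbs =
      innerRowEntry a γ t.natAbs := by
  rcases h : t.natAbs with _ | m
  · obtain rfl : t = 0 := by omega
    norm_num [innerRowEntry]
    ring
  · have hnbr : (t - 1).natAbs = m ∧ (t + 1).natAbs = m + 2 ∨
        (t - 1).natAbs = m + 2 ∧ (t + 1).natAbs = m := by omega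
    rcases hnbr with ⟨h₁, h₂⟩ | ⟨h₁, h₂⟩ <;>
    · rw [h₁, h₂]
      simp only [innerRowEntry]
      ring

lemma kmsTridiag_mul_kmsMatrix_apply {n : ℕ} (hn : 1 ≤ n) (a γ : ℝ) (i j : Fin (n + 1)) :
    (kmsTridiag n a * kmsMatrix n γ) i j =
      if (i : ℕ) = 0 ∨ (i : ℕ) = n then endRowEntry a γ ((i : ℤ) - (j : ℤ)).natAbs
      else innerRowEntry a γ ((i : ℤ) - (j : ℤ)).natAbs := by
  refine (kmsTridiag_mulVec_apply n a (fun k : ℕ => γ ^ ((k : ℤ) - (j : ℤ)).natAbs) i).trans ?_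
  obtain ⟨i, hi⟩ := i
  dsimp only
  rcases (show i = 0 ∨ i = n ∨ (0 < i ∧ i < n) by omega) with rfl | hin | ⟨hi₀, hin⟩
  · simp only [true_or, if_true, lt_irrefl, if_false, show 0 < n by omega, one_mul, mul_zero,
      sub_zero]
    rw [← endRowEntry_eq]
    congr 3
    omega
  · simp only [hin, or_true, if_true, lt_irrefl, if_false, show 0 < n by omega, one_mul, mul_zero,
      sub_zero]
    rw [← endRowEntry_eq]
    congr 3
    omega
  · simp only [show ¬(i = 0 ∨ i = n) by omega, if_false, hi₀, hin, if_true]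
    rw [← innerRowEntry_eq]
    push_cast [Nat.cast_sub hi₀]
    ring_nf

lemma kmsTridiag_mul_kmsMatrix_self {n : ℕ} (hn : 1 ≤ n) (a : ℝ) :
    kmsTridiag n a * kmsMatrix n a = (1 - a ^ 2) • 1 := by
  ext i j
  rw [kmsTridiag_mul_kmsMatrix_apply hn, Matrix.smul_apply, one_apply, smul_eq_mul]
  rcases h : ((i : ℤ) - (j : ℤ)).natAbs with _ | m
  · obtain rfl : i = j := Fin.ext (by omega)
    simp only [endRowEntry, innerRowEntry, if_true]
    split_ifs <;> ring
  · have hij : i ≠ j := fun hij => by simp [hij] at h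
    simp only [endRowEntry, innerRowEntry, if_neg hij]
    split_ifs <;> ring

lemma kmsMatrix_mul_kmsTridiag_self {n : ℕ} (hn : 1 ≤ n) {a : ℝ} (ha : a ^ 2 ≠ 1) :
    kmsMatrix n a * kmsTridiag n a = (1 - a ^ 2) • 1 := by
  have hc : 1 - a ^ 2 ≠ 0 := sub_ne_zero.2 (Ne.symm ha)
  have hinv : kmsTridiag n a * ((1 - a ^ 2)⁻¹ • kmsMatrix n a) = 1 := by
    rw [mul_smul_comm, kmsTridiag_mul_kmsMatrix_self hn, smul_smul, inv_mul_cancel₀ hc, one_smul]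
  have hinv' := mul_eq_one_comm.1 hinv
  rw [smul_mul_assoc] at hinv'
  rw [← hinv', smul_smul, mul_inv_cancel₀ hc, one_smul]

lemma geomMech_mulVec_one {n : ℕ} (hn : 1 ≤ n) {γ : ℝ} (hγ : γ ^ 2 ≠ 1) :
    geomMech n γ *ᵥ 1 = 1 := by
  have hc : 1 - γ ^ 2 ≠ 0 := sub_ne_zero.2 (Ne.symm hγ)
  have h1 : 1 + γ ≠ 0 := fun h => hc (by rw [show γ = -1 by linarith]; norm_num)
  calc geomMech n γ *ᵥ 1 = kmsMatrix n γ *ᵥ geomWeight n γ := by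
        rw [geomMech, ← mulVec_mulVec]
        congr 1
        ext j
        simp [mulVec_diagonal]
    _ = (1 - γ ^ 2)⁻¹ • ((kmsMatrix n γ * kmsTridiag n γ) *ᵥ 1) := by
        rw [← mulVec_mulVec, kmsTridiag_mulVec_one hn h1, mulVec_smul, smul_smul,
          inv_mul_cancel₀ hc, one_smul]
    _ = 1 := by
        rw [kmsMatrix_mul_kmsTridiag_self hn hγ, smul_mulVec, one_mulVec, smul_smul,
          inv_mul_cancel₀ hc, one_smul]

lemma geomMechInv_mul_geomMech {n : ℕ} (hn : 1 ≤ n) {a : ℝ} (ha : a ^ 2 ≠ 1) :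
    geomMechInv n a * geomMech n a = 1 := by
  have hc : 1 - a ^ 2 ≠ 0 := sub_ne_zero.2 (Ne.symm ha)
  have hw : ∀ i, geomWeight n a i ≠ 0 := by
    have hadd : 1 + a ≠ 0 := fun h => hc (by rw [show a = -1 by linarith]; norm_num)
    have hsub : 1 - a ≠ 0 := fun h => hc (by rw [show a = 1 by linarith]; norm_num)
    intro i
    unfold geomWeight
    split_ifs <;> positivity
  rw [geomMechInv, geomMech, Matrix.mul_assoc, ← Matrix.mul_assoc (kmsTridiag n a),
    kmsTridiag_mul_kmsMatrix_self hn, smul_one_eq_diagonal, diagonal_mul_diagonal,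
    diagonal_mul_diagonal, ← diagonal_one]
  congr 1
  ext i
  have := hw i
  field_simp

lemma endRowEntry_nonneg {a γ : ℝ} (h₀ : 0 ≤ a) (ha : a ≤ γ) (h₁ : γ ≤ 1) (m : ℕ) :
    0 ≤ endRowEntry a γ m := by
  rcases m with _ | m
  · show 0 ≤ 1 - a * γ
    nlinarith
  · exact mul_nonneg (by linarith) (pow_nonneg (by linarith) m)

lemma innerRowEntry_nonneg {a γ : ℝ} (h₀ : 0 ≤ a) (ha : a ≤ γ) (h₁ : γ ≤ 1) (m : ℕ) :
    0 ≤ innerRowEntry a γ m := by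
  rcases m with _ | m
  · show 0 ≤ 1 + a ^ 2 - 2 * a * γ
    nlinarith
  · exact mul_nonneg (mul_nonneg (by linarith) (by nlinarith)) (pow_nonneg (by linarith) m)

lemma kmsTridiag_mul_kmsMatrix_nonneg {n : ℕ} (hn : 1 ≤ n) {a γ : ℝ} (h₀ : 0 ≤ a) (ha : a ≤ γ)
    (h₁ : γ ≤ 1) (i j : Fin (n + 1)) : 0 ≤ (kmsTridiag n a * kmsMatrix n γ) i j := by
  rw [kmsTridiag_mul_kmsMatrix_apply hn]
  split_ifs
  · exact endRowEntry_nonneg h₀ ha h₁ _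
  · exact innerRowEntry_nonneg h₀ ha h₁ _

lemma geomMechInv_mul_geomMech_nonneg {n : ℕ} (hn : 1 ≤ n) {a γ : ℝ} (h₀ : 0 ≤ a) (ha : a ≤ γ)
    (h₁ : γ < 1) (i j : Fin (n + 1)) : 0 ≤ (geomMechInv n a * geomMech n γ) i j := by
  rw [geomMechInv, geomMech, Matrix.mul_assoc, ← Matrix.mul_assoc (kmsTridiag n a), diagonal_mul,
    mul_diagonal]
  have hu : 0 ≤ 1 - a ^ 2 := by nlinarith
  exact mul_nonneg
    (inv_nonneg.2 (mul_nonneg hu (geomWeight_pos n (by linarith) (by linarith) i).le))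
    (mul_nonneg (kmsTridiag_mul_kmsMatrix_nonneg hn h₀ ha h₁.le i j)
      (geomWeight_pos n (by linarith) h₁ j).le)

/-- For `0 < α ≤ β < 1`, the `β`-geometric mechanism can be derived from the
`α`-geometric mechanism: there is a row-stochastic `T` with `G_{n,β} = G_{n,α}·T`. -/
theorem geometric_derivable (n : ℕ) (hn : 1 ≤ n) (α β : ℝ)
    (h0 : 0 < α) (hab : α ≤ β) (h1 : β < 1)
    (Ga Gb : Matrix (Fin (n + 1)) (Fin (n + 1)) ℝ)
    (hGa : ∀ i j, Ga i j =
      if (j : ℕ) = 0 ∨ (j : ℕ) = n then α ^ ((i : ℤ) - (j : ℤ)).natAbs / (1 + α)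
      else ((1 - α) / (1 + α)) * α ^ ((i : ℤ) - (j : ℤ)).natAbs)
    (hGb : ∀ i j, Gb i j =
      if (j : ℕ) = 0 ∨ (j : ℕ) = n then β ^ ((i : ℤ) - (j : ℤ)).natAbs / (1 + β)
      else ((1 - β) / (1 + β)) * β ^ ((i : ℤ) - (j : ℤ)).natAbs) :
    ∃ T : Matrix (Fin (n + 1)) (Fin (n + 1)) ℝ,
      (∀ r r', 0 ≤ T r r') ∧ (∀ r, ∑ r', T r r' = 1) ∧ Gb = Ga * T := by
  obtain rfl : Ga = geomMech n α := ext fun i j => (hGa i j).trans (geomMech_apply n α i j).symm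
  obtain rfl : Gb = geomMech n β := ext fun i j => (hGb i j).trans (geomMech_apply n β i j).symm
  have hα : α ^ 2 < 1 := by nlinarith
  have hβ : β ^ 2 < 1 := by nlinarith
  have hinv := geomMechInv_mul_geomMech hn hα.ne
  refine ⟨geomMechInv n α * geomMech n β, geomMechInv_mul_geomMech_nonneg hn h0.le hab h1,
    fun r => ?_, ?_⟩
  · calc ∑ r', (geomMechInv n α * geomMech n β) r r'
        = ((geomMechInv n α * geomMech n β) *ᵥ 1) r := by simp [mulVec, dotProduct]
      _ = ((geomMechInv n α * geomMech n α) *ᵥ 1) r := by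
        rw [← mulVec_mulVec, ← mulVec_mulVec, geomMech_mulVec_one hn hβ.ne,
          geomMech_mulVec_one hn hα.ne]
      _ = 1 := by rw [hinv, one_mulVec, Pi.one_apply]
  · rw [← Matrix.mul_assoc, mul_eq_one_comm.1 hinv, Matrix.one_mul]
end

section
/- There exists a 1/2-differentially private row-stochastic mechanism M on {0,1,2,3} that cannot be derived from the geometric mechanism G_{3,1/2} by any row-stochastic post-processing. Specifically, the matrix M with rows (1/9, 2/9, 4/9, 2/9), (2/9, 1/9, 2/9, 4/9), (4/9, 2/9, 1/9, 2/9), (13/18, 1/9, 1/18, 1/9) is 1/2-differentially private, but the entries M(0,1)=2/9, M(1,1)=1/9, M(2,1)=2/9 violate the condition (1+α²)·x₂ - α·(x₁+x₃) ≥ 0 for α = 1/2, so no row-stochastic T satisfies M = G_{3,1/2}·T. -/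
/-! The functional `x ↦ (1 + α²) x₁ - α (x₀ + x₂)` on three consecutive entries of a column
vanishes on every column of the geometric mechanism except the one indexed by the middle row,
where it is the column's weight times `1 - α² ≥ 0`. Post-processing by a nonnegative `T` takes nonnegative
combinations of columns, so every mechanism derived from `G` keeps the functional nonnegative,
whereas `M` makes it negative in column 1. -/

open Matrix

def secondDiff (α x₀ x₁ x₂ : ℝ) : ℝ := (1 + α ^ 2) * x₁ - α * (x₀ + x₂)

lemma secondDiff_mul_left (α c x₀ x₁ x₂ : ℝ) :
    secondDiff α (c * x₀) (c * x₁) (c * x₂) = c * secondDiff α x₀ x₁ x₂ := by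
  unfold secondDiff; ring

lemma secondDiff_pow_natAbs_nonneg {α : ℝ} (hα₀ : 0 ≤ α) (hα₁ : α ≤ 1) (i j : ℤ) :
    0 ≤ secondDiff α (α ^ (i - 1 - j).natAbs) (α ^ (i - j).natAbs) (α ^ (i + 1 - j).natAbs) := by
  unfold secondDiff
  rcases lt_trichotomy i j with hij | rfl | hij
  · obtain ⟨n, hn⟩ : ∃ n : ℕ, j - i = n + 1 := ⟨(j - i - 1).toNat, by omega⟩
    rw [show (i - 1 - j).natAbs = n + 2 by omega, show (i - j).natAbs = n + 1 by omega,
      show (i + 1 - j).natAbs = n by omega]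
    apply le_of_eq; ring
  · norm_num; nlinarith
  · obtain ⟨n, hn⟩ : ∃ n : ℕ, i - j = n + 1 := ⟨(i - j - 1).toNat, by omega⟩
    rw [show (i - 1 - j).natAbs = n by omega, show (i - j).natAbs = n + 1 by omega,
      show (i + 1 - j).natAbs = n + 2 by omega]
    apply le_of_eq; ring

lemma secondDiff_mul_apply_nonneg {ι κ μ : Type*} [Fintype κ] {α : ℝ} {G : Matrix ι κ ℝ}
    {T : Matrix κ μ ℝ} (hT : ∀ j r, 0 ≤ T j r) {i₀ i₁ i₂ : ι}
    (hG : ∀ j, 0 ≤ secondDiff α (G i₀ j) (G i₁ j) (G i₂ j)) (r : μ) :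
    0 ≤ secondDiff α ((G * T) i₀ r) ((G * T) i₁ r) ((G * T) i₂ r) := by
  have h : secondDiff α ((G * T) i₀ r) ((G * T) i₁ r) ((G * T) i₂ r) =
      ∑ j, secondDiff α (G i₀ j) (G i₁ j) (G i₂ j) * T j r := by
    simp only [secondDiff, mul_apply, Finset.mul_sum, ← Finset.sum_add_distrib,
      ← Finset.sum_sub_distrib]
    exact Finset.sum_congr rfl fun j _ => by ring
  rw [h]
  exact Finset.sum_nonneg fun j _ => mul_nonneg (hG j) (hT j r)

/-- A `1/2`-differentially private mechanism on `{0,1,2,3}` that cannot be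
derived from the geometric mechanism `G_{3,1/2}` by any row-stochastic
post-processing: the condition `(1+α²)x₂ - α(x₁+x₃) ≥ 0` fails in column 1. -/
theorem not_derivable_example
    (G M : Matrix (Fin 4) (Fin 4) ℝ)
    (hG : ∀ i j, G i j =
      if (j : ℕ) = 0 ∨ (j : ℕ) = 3 then
        (1/2 : ℝ) ^ ((i : ℤ) - (j : ℤ)).natAbs / (1 + 1/2)
      else ((1 - 1/2) / (1 + 1/2)) * (1/2 : ℝ) ^ ((i : ℤ) - (j : ℤ)).natAbs)
    (hM : M = !![1/9, 2/9, 4/9, 2/9;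
                 2/9, 1/9, 2/9, 4/9;
                 4/9, 2/9, 1/9, 2/9;
                 13/18, 1/9, 1/18, 1/9]) :
    (∀ (i : Fin 3) (r : Fin 4),
      (1/2 : ℝ) * M i.castSucc r ≤ M i.succ r ∧
      M i.succ r ≤ 2 * M i.castSucc r) ∧
    (1 + (1/2 : ℝ) ^ 2) * M 1 1 - (1/2) * (M 0 1 + M 2 1) < 0 ∧
    ¬ ∃ T : Matrix (Fin 4) (Fin 4) ℝ,
        (∀ r r', 0 ≤ T r r') ∧ (∀ r, ∑ r', T r r' = 1) ∧ M = G * T := by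
  have hviolation : (1 + (1/2 : ℝ) ^ 2) * M 1 1 - (1/2) * (M 0 1 + M 2 1) < 0 := by
    subst hM; norm_num [cons_val_two, vecHead, vecTail]
  refine ⟨?_, hviolation, ?_⟩
  · subst hM
    intro i r
    fin_cases i <;> fin_cases r <;> norm_num [Fin.castSucc, Fin.castAdd, Fin.castLE, Fin.succ]
  · rintro ⟨T, hT, -, rfl⟩
    set c : Fin 4 → ℝ := fun j => if (j : ℕ) = 0 ∨ (j : ℕ) = 3 then 2 / 3 else 1 / 3
    have hGc : ∀ i j, G i j = c j * (1/2 : ℝ) ^ ((i : ℤ) - (j : ℤ)).natAbs := by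
      intro i j; rw [hG]; simp only [c]; split_ifs <;> ring
    have hcolumns : ∀ j, 0 ≤ secondDiff (1/2) (G 0 j) (G 1 j) (G 2 j) := by
      intro j
      rw [hGc, hGc, hGc, secondDiff_mul_left]
      refine mul_nonneg (by simp only [c]; split_ifs <;> norm_num) ?_
      have hk := secondDiff_pow_natAbs_nonneg (α := 1/2) (by norm_num) (by norm_num) 1 j
      norm_num at hk ⊢
      exact hk
    exact hviolation.not_ge (secondDiff_mul_apply_nonneg hT hcolumns 1)
end

section
/- Infeasibility argument: suppose real numbers a, b, b', b'', c, α with 0 < α < 1 satisfy a + b + c = 1, α·a + b' + c/α = 1, a, b, c, b', b'' ≥ 0, and (1+α²)·b' - α·(b + b'') < 0. Then α²·a + b'' + c/α² > 1. -/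
/-!
Multiplying the second row constraint by `α` gives `α²a + αb' + c = α`; combined with
`a + b + c = 1` this yields the exact identity
`α² (α²a + b'' + c/α² - 1) = α(1 - α)² - α((1 + α²)b' - α(b + b''))`,
whose right-hand side is positive as soon as the bracket is negative.
-/

theorem sq_mul_third_row_sub_one {K : Type*} [Field K] {α a b b' b'' c : K} (hα : α ≠ 0)
    (hrow1 : a + b + c = 1) (hrow2 : α * a + b' + c / α = 1) :
    α ^ 2 * (α ^ 2 * a + b'' + c / α ^ 2 - 1) =
      α * (1 - α) ^ 2 - α * ((1 + α ^ 2) * b' - α * (b + b'')) := by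
  have hrow2' : α ^ 2 * a + α * b' + c = α := by
    field_simp at hrow2
    linear_combination hrow2
  field_simp
  linear_combination (1 + α ^ 2) * hrow2' - α ^ 2 * hrow1

theorem infeasibility_general (α a b b' b'' c : ℝ) (h0 : 0 < α)
    (hrow1 : a + b + c = 1) (hrow2 : α * a + b' + c / α = 1)
    (hneg : (1 + α ^ 2) * b' - α * (b + b'') < 0) :
    1 < α ^ 2 * a + b'' + c / α ^ 2 := by
  have hgap : 0 < α ^ 2 * (α ^ 2 * a + b'' + c / α ^ 2 - 1) := by
    rw [sq_mul_third_row_sub_one h0.ne' hrow1 hrow2]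
    exact sub_pos_of_lt ((mul_neg_of_pos_of_neg h0 hneg).trans_le (by positivity))
  exact sub_pos.1 (pos_of_mul_pos_right hgap (sq_nonneg α))

/-- Infeasibility argument: if `a + b + c = 1`, `α·a + b' + c/α = 1`, all of
`a, b, c, b', b''` are nonnegative, and `(1+α²)·b' - α·(b + b'') < 0`, then
`α²·a + b'' + c/α² > 1`. -/
theorem infeasibility (α a b b' b'' c : ℝ) (h0 : 0 < α) (h1 : α < 1)
    (hrow1 : a + b + c = 1) (hrow2 : α * a + b' + c / α = 1)
    (ha : 0 ≤ a) (hb : 0 ≤ b) (hc : 0 ≤ c) (hb' : 0 ≤ b') (hb'' : 0 ≤ b'')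
    (hneg : (1 + α ^ 2) * b' - α * (b + b'') < 0) :
    1 < α ^ 2 * a + b'' + c / α ^ 2 :=
  infeasibility_general α a b b' b'' c h0 hrow1 hrow2 hneg
end
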